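/- arXiv:2312.04354 — 2 statements merged into one kernel-verified Lean document; each statement's English description precedes it below -/
import Mathlib

section
/- Let ε and A be real numbers with 0 < ε ≤ 1 and A ≥ e^{2ε} · ε^{−ε}, and let x be a real number with x > 1 and x ≤ A · (log x)^ε. Then x < A · (2 log A)^ε. -/
open Real

/-! Taking logarithms, `L = log x` satisfies `L ≤ log A + ε log L`, and `log L ≤ L / e` together
with `ε < e / 2` turns this into `L < 2 log A`; monotonicity of `t ↦ A t ^ ε` finishes. -/

lemma Real.exp_one_mul_log_le {y : ℝ} (hy : 0 < y) : exp 1 * log y ≤ y := by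
  simpa [exp_log hy] using exp_one_mul_le_exp (x := log y)

lemma Real.log_lt_two_mul_log_of_le_mul_log_rpow {ε A x : ℝ} (hε0 : 0 ≤ ε)
    (hε : 2 * ε < exp 1) (hx1 : 1 < x) (hx : x ≤ A * log x ^ ε) :
    log x < 2 * log A := by
  have hL : 0 < log x := log_pos hx1
  have hLε : 0 < log x ^ ε := rpow_pos_of_pos hL ε
  have hA : 0 < A := pos_of_mul_pos_left (by linarith) hLε.le
  have hlog : log x ≤ log A + ε * log (log x) := by
    simpa [log_mul hA.ne' hLε.ne', log_rpow hL] using log_le_log (by linarith) hx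
  have hloglog : ε * (exp 1 * log (log x)) ≤ ε * log x :=
    mul_le_mul_of_nonneg_left (exp_one_mul_log_le hL) hε0
  -- `(e - ε) log x ≤ e log A` with `e - ε > e / 2`
  nlinarith [exp_pos 1]

theorem log_power_bound_general (ε A x : ℝ) (hε0 : 0 < ε) (hε1 : ε ≤ 1)
    (hx1 : x > 1)
    (hx : x ≤ A * Real.log x ^ ε) :
    x < A * (2 * Real.log A) ^ ε := by
  have hL : 0 < log x := log_pos hx1
  have hA : 0 < A := pos_of_mul_pos_left (by linarith) (rpow_pos_of_pos hL ε).le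
  have hε : 2 * ε < exp 1 := by linarith [exp_one_gt_d9]
  calc x ≤ A * log x ^ ε := hx
    _ < A * (2 * log A) ^ ε := by
      gcongr
      exact log_lt_two_mul_log_of_le_mul_log_rpow hε0.le hε hx1 hx

theorem log_power_bound (ε A x : ℝ) (hε0 : 0 < ε) (hε1 : ε ≤ 1)
    (hA : A ≥ Real.exp (2 * ε) * ε ^ (-ε)) (hx1 : x > 1)
    (hx : x ≤ A * Real.log x ^ ε) :
    x < A * (2 * Real.log A) ^ ε :=
  log_power_bound_general ε A x hε0 hε1 hx1 hx
end

section
/- Let n ≥ 1 be an integer, z a complex number and r a real number with 0 < r < 1 and |z| ≤ r. Then | log |Φ_n(z)| | ≤ (|log(1−r)| / (1−r)) · (|z| / r), where Φ_n denotes the n-th cyclotomic polynomial evaluated at z and the outer log is the real natural logarithm of the complex absolute value |Φ_n(z)|. -/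
/-!
By Möbius inversion of `∏_{d ∣ n} Φ_d(z) = z ^ n - 1`, `log |Φ_n(z)|` is a `±1`-combination of
the numbers `log |z ^ d - 1|` with `d ∣ n`, each of which is at most `-log (1 - |z| ^ d)` in
absolute value. Concavity of `log` bounds `-log (1 - x)` by the chord `x / r · (-log (1 - r))`
on `[0, r]`, and the geometric series `∑_{d ≥ 1} |z| ^ d ≤ |z| / (1 - r)` finishes the proof.
-/

open Finset Polynomial ArithmeticFunction
open scoped ArithmeticFunction.Moebius

lemma neg_log_one_sub_le_div_mul {x r : ℝ} (hx : 0 ≤ x) (hxr : x ≤ r) (hr : r < 1) :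
    -Real.log (1 - x) ≤ x / r * -Real.log (1 - r) := by
  rcases hx.eq_or_lt with rfl | hx_pos
  · simp
  have hr0 : 0 < r := hx_pos.trans_le hxr
  have hw : x / r ≤ 1 := (div_le_one hr0).2 hxr
  have hchord := strictConcaveOn_log_Ioi.concaveOn.2 (Set.mem_Ioi.2 (sub_pos.2 hr))
    (Set.mem_Ioi.2 one_pos) (div_nonneg hx hr0.le) (sub_nonneg.2 hw) (add_sub_cancel _ _)
  have hcomb : (x / r) • (1 - r) + (1 - x / r) • (1 : ℝ) = 1 - x := by
    simp only [smul_eq_mul]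
    field_simp
    ring
  rw [hcomb, smul_eq_mul, smul_eq_mul, Real.log_one, mul_zero, add_zero] at hchord
  linarith

lemma abs_log_le_neg_log_one_sub {a t : ℝ} (hlo : 1 - t ≤ a) (hhi : a ≤ 1 + t) (ht : t < 1) :
    |Real.log a| ≤ -Real.log (1 - t) := by
  have h1t : 0 < 1 - t := by linarith
  refine abs_le.2 ⟨?_, ?_⟩
  · rw [neg_neg]
    exact Real.log_le_log h1t hlo
  · have hprod : Real.log (1 + t) + Real.log (1 - t) ≤ 0 := by
      rw [← Real.log_mul (by linarith) h1t.ne']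
      exact Real.log_nonpos (by nlinarith) (by nlinarith)
    linarith [Real.log_le_log (by linarith) hhi]

lemma abs_log_norm_sub_one_le {E : Type*} [SeminormedRing E] [NormOneClass E] {w : E}
    (hw : ‖w‖ < 1) : |Real.log ‖w - 1‖| ≤ -Real.log (1 - ‖w‖) := by
  refine abs_log_le_neg_log_one_sub ?_ ?_ hw
  · simpa [norm_sub_rev] using norm_sub_norm_le (1 : E) w
  · simpa [add_comm] using norm_sub_le w 1

lemma abs_log_norm_pow_sub_one_le {K : Type*} [NormedField K] {z : K} {r : ℝ} (hr : r < 1)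
    (hz : ‖z‖ ≤ r) {d : ℕ} (hd : d ≠ 0) :
    |Real.log ‖z ^ d - 1‖| ≤ ‖z‖ ^ d / r * -Real.log (1 - r) := by
  have hz1 : ‖z‖ < 1 := hz.trans_lt hr
  have hzd : ‖z‖ ^ d ≤ ‖z‖ := pow_le_of_le_one (norm_nonneg z) hz1.le hd
  rw [← norm_pow] at hzd ⊢
  exact (abs_log_norm_sub_one_le (hzd.trans_lt hz1)).trans
    (neg_log_one_sub_le_div_mul (norm_nonneg _) (hzd.trans hz) hr)

lemma sum_divisors_log_norm_cyclotomic_eval {K : Type*} [NormedField K] {n : ℕ} (hn : 0 < n)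
    {z : K} (hz : z ^ n ≠ 1) :
    ∑ d ∈ n.divisors, Real.log ‖(cyclotomic d K).eval z‖ = Real.log ‖z ^ n - 1‖ := by
  have hprod : ∏ d ∈ n.divisors, (cyclotomic d K).eval z = z ^ n - 1 := by
    rw [← eval_prod, prod_cyclotomic_eq_X_pow_sub_one hn]
    simp
  have hne : ∀ d ∈ n.divisors, ‖(cyclotomic d K).eval z‖ ≠ 0 := fun d hd =>
    norm_ne_zero_iff.2 <| prod_ne_zero_iff.1 (hprod ▸ sub_ne_zero.2 hz) d hd
  rw [← Real.log_prod hne, ← norm_prod, hprod]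

lemma abs_log_norm_cyclotomic_eval_le_sum {K : Type*} [NormedField K] {n : ℕ} (hn : 0 < n)
    {z : K} (hz : ∀ m, 0 < m → z ^ m ≠ 1) :
    |Real.log ‖(cyclotomic n K).eval z‖| ≤ ∑ d ∈ n.divisors, |Real.log ‖z ^ d - 1‖| := by
  rw [← sum_eq_iff_sum_smul_moebius_eq.1
    (fun m hm => sum_divisors_log_norm_cyclotomic_eval hm (hz m hm)) n hn,
    ← Nat.sum_divisorsAntidiagonal' (f := fun _ d => |Real.log ‖z ^ d - 1‖|)]
  refine (abs_sum_le_sum_abs _ _).trans (sum_le_sum fun x _ => ?_)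
  rw [zsmul_eq_mul, abs_mul]
  have hμ : |(μ x.1 : ℝ)| ≤ 1 := by exact_mod_cast abs_moebius_le_one
  exact mul_le_of_le_one_left (abs_nonneg _) hμ

lemma sum_divisors_pow_le {K : Type*} [Field K] [LinearOrder K] [IsStrictOrderedRing K] {x : K}
    (hx0 : 0 ≤ x) (hx1 : x < 1) (n : ℕ) : ∑ d ∈ n.divisors, x ^ d ≤ x / (1 - x) := by
  calc ∑ d ∈ n.divisors, x ^ d ≤ ∑ d ∈ Ico 1 (n + 1), x ^ d :=
        sum_le_sum_of_subset_of_nonneg (filter_subset _ _) fun d _ _ => pow_nonneg hx0 d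
    _ ≤ x / (1 - x) := by simpa using geom_sum_Ico_le_of_lt_one (m := 1) hx0 hx1

theorem abs_log_abs_cyclotomic_le (n : ℕ) (hn : 1 ≤ n) (z : ℂ) (r : ℝ)
    (hr0 : 0 < r) (hr1 : r < 1) (hz : ‖z‖ ≤ r) :
    |Real.log ‖(Polynomial.cyclotomic n ℂ).eval z‖| ≤
      |Real.log (1 - r)| / (1 - r) * (‖z‖ / r) := by
  have hz1 : ‖z‖ < 1 := hz.trans_lt hr1
  have hC : 0 ≤ -Real.log (1 - r) := neg_nonneg.2 (Real.log_nonpos (by linarith) (by linarith))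
  have hroot : ∀ m, 0 < m → z ^ m ≠ 1 := fun m hm h => by
    have hlt := pow_lt_one₀ (norm_nonneg z) hz1 hm.ne'
    rw [← norm_pow, h, norm_one] at hlt
    exact hlt.false
  calc |Real.log ‖(cyclotomic n ℂ).eval z‖|
      ≤ ∑ d ∈ n.divisors, |Real.log ‖z ^ d - 1‖| := abs_log_norm_cyclotomic_eval_le_sum hn hroot
    _ ≤ ∑ d ∈ n.divisors, ‖z‖ ^ d / r * -Real.log (1 - r) := sum_le_sum fun d hd =>
        abs_log_norm_pow_sub_one_le hr1 hz (Nat.pos_of_mem_divisors hd).ne'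
    _ = (∑ d ∈ n.divisors, ‖z‖ ^ d) / r * -Real.log (1 - r) := by rw [sum_div, sum_mul]
    _ ≤ ‖z‖ / (1 - ‖z‖) / r * -Real.log (1 - r) := by
        gcongr
        exact sum_divisors_pow_le (norm_nonneg z) hz1 n
    _ ≤ ‖z‖ / (1 - r) / r * -Real.log (1 - r) := by gcongr
    _ = |Real.log (1 - r)| / (1 - r) * (‖z‖ / r) := by
        rw [abs_of_nonpos (neg_nonneg.1 hC)]
        ring
end
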